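/- arXiv:2507.10144 — 6 statements merged into one kernel-verified Lean document; each statement's English description precedes it below -/
import Mathlib

section
/- Let $B_0 \in \mathbb{R}^{b\times b}$ admit an eigenvalue decomposition $B_0 = \Omega_0^{-1}\Lambda_0\Omega_0$ where $\Lambda_0$ is diagonal with real eigenvalues $\lambda_0^{(1)} \le \cdots \le \lambda_0^{(b)}$. Then for any matrix polynomial $\Phi(X) = C_0 + XC_1 + \cdots + X^dC_d$ with coefficients $C_i \in \mathbb{R}^{b\times b}$, the spectral norm satisfies $\|\Phi(B_0)\| \le \sqrt{b}\,\|\Omega_0^{-1}\|\,\|\Omega_0\|\, \max_{\lambda_0^{(1)} \le \lambda \le \lambda_0^{(b)}} \|\Phi(\lambda I)\|$. -/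
open scoped Matrix.Norms.L2Operator
open Matrix

/-- Row sum of squares is bounded by the squared L2 operator norm. -/
lemma aux_row_sq_le (b : ℕ) (A : Matrix (Fin b) (Fin b) ℝ) (k : Fin b) :
    ∑ j, (A k j) ^ 2 ≤ ‖A‖ ^ 2 := by
  have hmv := Matrix.l2_opNorm_mulVec Aᵀ (EuclideanSpace.single k (1 : ℝ))
  have hT : ‖Aᵀ‖ = ‖A‖ := by
    rw [← Matrix.conjTranspose_eq_transpose_of_trivial, Matrix.l2_opNorm_conjTranspose]
  rw [hT, EuclideanSpace.norm_single, norm_one, mul_one] at hmv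
  have hcoord : ∀ j, ((EuclideanSpace.equiv (Fin b) ℝ).symm
      (Aᵀ *ᵥ (EuclideanSpace.single k (1 : ℝ)))) j = A k j := by
    intro j
    simp [Matrix.mulVec, dotProduct, EuclideanSpace.single_apply, Matrix.transpose_apply]
  have hnorm : ‖(EuclideanSpace.equiv (Fin b) ℝ).symm
      (Aᵀ *ᵥ (EuclideanSpace.single k (1 : ℝ)))‖ ^ 2 = ∑ j, (A k j) ^ 2 := by
    rw [EuclideanSpace.norm_eq, Real.sq_sqrt (by positivity)]
    exact Finset.sum_congr rfl fun j _ => by rw [hcoord j, Real.norm_eq_abs, sq_abs]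
  calc ∑ j, (A k j) ^ 2 = _ := hnorm.symm
    _ ≤ ‖A‖ ^ 2 := by
        have h0 : (0:ℝ) ≤ ‖(EuclideanSpace.equiv (Fin b) ℝ).symm
            (Aᵀ *ᵥ (EuclideanSpace.single k (1 : ℝ)))‖ := norm_nonneg _
        exact pow_le_pow_left₀ h0 hmv 2

/-- Operator norm bounded by `√b` times a uniform row bound. -/
lemma aux_opNorm_le (b : ℕ) (S : Matrix (Fin b) (Fin b) ℝ) (K : ℝ) (hK : 0 ≤ K)
    (h : ∀ k, ∑ j, (S k j) ^ 2 ≤ K ^ 2) : ‖S‖ ≤ Real.sqrt b * K := by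
  rw [Matrix.l2_opNorm_def]
  refine ContinuousLinearMap.opNorm_le_bound _ (by positivity) fun x => ?_
  have hxsq : ∑ j, (x j) ^ 2 = ‖x‖ ^ 2 := by
    rw [EuclideanSpace.norm_eq, Real.sq_sqrt (by positivity)]
    exact Finset.sum_congr rfl fun j _ => by rw [Real.norm_eq_abs, sq_abs]
  have key : ∀ k, ((S *ᵥ (WithLp.equiv 2 (Fin b → ℝ) x)) k) ^ 2 ≤ K ^ 2 * ‖x‖ ^ 2 := by
    intro k
    have hcs := Finset.sum_mul_sq_le_sq_mul_sq Finset.univ (fun j => S k j) (fun j => x j)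
    have : (S *ᵥ (WithLp.equiv 2 (Fin b → ℝ) x)) k = ∑ j, S k j * x j := by
      simp [Matrix.mulVec, dotProduct]
    rw [this]
    calc (∑ j, S k j * x j) ^ 2 ≤ (∑ j, (S k j) ^ 2) * ∑ j, (x j) ^ 2 := hcs
      _ ≤ K ^ 2 * ‖x‖ ^ 2 := by
          rw [hxsq]
          exact mul_le_mul_of_nonneg_right (h k) (by positivity)
  have hLx : ((Matrix.toEuclideanLin (𝕜 := ℝ) (m := Fin b) (n := Fin b)).trans
      LinearMap.toContinuousLinearMap S) x =
      (WithLp.equiv 2 (Fin b → ℝ)).symm (S *ᵥ (WithLp.equiv 2 (Fin b → ℝ) x)) := rfl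
  rw [hLx]
  have hnn : (0:ℝ) ≤ Real.sqrt b * K * ‖x‖ := by positivity
  rw [EuclideanSpace.norm_eq]
  have hsum : ∑ j, ‖((WithLp.equiv 2 (Fin b → ℝ)).symm
      (S *ᵥ (WithLp.equiv 2 (Fin b → ℝ) x))) j‖ ^ 2 ≤ (b : ℝ) * (K ^ 2 * ‖x‖ ^ 2) := by
    calc ∑ j, ‖((WithLp.equiv 2 (Fin b → ℝ)).symm
          (S *ᵥ (WithLp.equiv 2 (Fin b → ℝ) x))) j‖ ^ 2
        = ∑ j, ((S *ᵥ (WithLp.equiv 2 (Fin b → ℝ) x)) j) ^ 2 :=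
          Finset.sum_congr rfl fun j _ => by rw [Real.norm_eq_abs, sq_abs]; rfl
      _ ≤ ∑ _j : Fin b, K ^ 2 * ‖x‖ ^ 2 := Finset.sum_le_sum fun j _ => key j
      _ = (b : ℝ) * (K ^ 2 * ‖x‖ ^ 2) := by simp [Finset.sum_const, mul_comm]
  calc Real.sqrt (∑ j, ‖((WithLp.equiv 2 (Fin b → ℝ)).symm
        (S *ᵥ (WithLp.equiv 2 (Fin b → ℝ) x))) j‖ ^ 2)
      ≤ Real.sqrt ((b : ℝ) * (K ^ 2 * ‖x‖ ^ 2)) := Real.sqrt_le_sqrt hsum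
    _ = Real.sqrt b * K * ‖x‖ := by
        rw [Real.sqrt_mul (by positivity), Real.sqrt_mul (by positivity),
          Real.sqrt_sq hK, Real.sqrt_sq (norm_nonneg _)]
        ring

lemma aux_conj_pow (b : ℕ) (Ω D : Matrix (Fin b) (Fin b) ℝ) (hΩ : IsUnit Ω) (i : ℕ) :
    (Ω⁻¹ * D * Ω) ^ i = Ω⁻¹ * D ^ i * Ω := by
  have h1 : Ω * Ω⁻¹ = 1 := Matrix.mul_nonsing_inv Ω ((Matrix.isUnit_iff_isUnit_det Ω).mp hΩ)
  have h2 : Ω⁻¹ * Ω = 1 := Matrix.nonsing_inv_mul Ω ((Matrix.isUnit_iff_isUnit_det Ω).mp hΩ)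
  induction i with
  | zero => simp [h2]
  | succ n ih =>
      rw [pow_succ, pow_succ, ih]
      calc Ω⁻¹ * D ^ n * Ω * (Ω⁻¹ * D * Ω) = Ω⁻¹ * D ^ n * (Ω * Ω⁻¹) * D * Ω := by
            simp only [Matrix.mul_assoc]
        _ = Ω⁻¹ * (D ^ n * D) * Ω := by rw [h1]; simp only [Matrix.mul_assoc, Matrix.mul_one]
        _ = _ := by simp only [Matrix.mul_assoc]

/-- bound on the spectral norm of a matrix polynomial evaluated at a
diagonalizable matrix with real eigenvalues. -/
theorem stmt_0 (b d : ℕ) (hb : 0 < b)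
    (Ω₀ : Matrix (Fin b) (Fin b) ℝ) (hΩ₀ : IsUnit Ω₀)
    (μ : Fin b → ℝ) (hμ : Monotone μ)
    (B₀ : Matrix (Fin b) (Fin b) ℝ)
    (hB₀ : B₀ = Ω₀⁻¹ * Matrix.diagonal μ * Ω₀)
    (C : Fin (d + 1) → Matrix (Fin b) (Fin b) ℝ)
    (M : ℝ)
    (hM : ∀ lam ∈ Set.Icc (μ ⟨0, hb⟩) (μ ⟨b - 1, Nat.sub_lt hb one_pos⟩),
      ‖∑ i : Fin (d + 1), lam ^ (i : ℕ) • C i‖ ≤ M) :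
    ‖∑ i : Fin (d + 1), B₀ ^ (i : ℕ) * C i‖ ≤
      Real.sqrt b * ‖Ω₀⁻¹‖ * ‖Ω₀‖ * M := by
  -- eigenvalues lie in the interval
  have hmem : ∀ k : Fin b, μ k ∈ Set.Icc (μ ⟨0, hb⟩) (μ ⟨b - 1, Nat.sub_lt hb one_pos⟩) := by
    intro k
    constructor
    · exact hμ (by simp [Fin.le_def])
    · exact hμ (by simp [Fin.le_def]; omega)
  have hM0 : 0 ≤ M := le_trans (norm_nonneg _) (hM _ (hmem ⟨0, hb⟩))
  set D := Matrix.diagonal μ with hD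
  set S := ∑ i : Fin (d + 1), D ^ (i : ℕ) * Ω₀ * C i with hS
  -- factorization
  have hfact : ∑ i : Fin (d + 1), B₀ ^ (i : ℕ) * C i = Ω₀⁻¹ * S := by
    rw [Finset.mul_sum]
    refine Finset.sum_congr rfl fun i _ => ?_
    rw [hB₀, aux_conj_pow b Ω₀ D hΩ₀]
    simp only [Matrix.mul_assoc]
  -- rows of S
  have hrow : ∀ k j, S k j = (Ω₀ * ∑ i : Fin (d + 1), (μ k) ^ (i : ℕ) • C i) k j := by
    intro k j
    rw [hS, Finset.mul_sum]
    simp only [Matrix.sum_apply]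
    refine Finset.sum_congr rfl fun i _ => ?_
    rw [hD, Matrix.diagonal_pow, Matrix.mul_assoc, Matrix.diagonal_mul]
    simp only [Matrix.mul_smul, Matrix.smul_apply, Matrix.mul_apply, Finset.mul_sum,
      Pi.pow_apply, smul_eq_mul]
    exact Finset.sum_congr rfl fun l _ => by ring
  -- row norm bound
  have hrowbound : ∀ k, ∑ j, (S k j) ^ 2 ≤ (‖Ω₀‖ * M) ^ 2 := by
    intro k
    have h1 : ∑ j, (S k j) ^ 2
        = ∑ j, ((Ω₀ * ∑ i : Fin (d + 1), (μ k) ^ (i : ℕ) • C i) k j) ^ 2 :=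
      Finset.sum_congr rfl fun j _ => by rw [hrow k j]
    rw [h1]
    calc ∑ j, ((Ω₀ * ∑ i : Fin (d + 1), (μ k) ^ (i : ℕ) • C i) k j) ^ 2
        ≤ ‖Ω₀ * ∑ i : Fin (d + 1), (μ k) ^ (i : ℕ) • C i‖ ^ 2 := aux_row_sq_le b _ k
      _ ≤ (‖Ω₀‖ * M) ^ 2 := by
          apply pow_le_pow_left₀ (norm_nonneg _)
          calc ‖Ω₀ * ∑ i : Fin (d + 1), (μ k) ^ (i : ℕ) • C i‖
              ≤ ‖Ω₀‖ * ‖∑ i : Fin (d + 1), (μ k) ^ (i : ℕ) • C i‖ := Matrix.l2_opNorm_mul _ _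
            _ ≤ ‖Ω₀‖ * M := mul_le_mul_of_nonneg_left (hM _ (hmem k)) (norm_nonneg _)
  have hSbound : ‖S‖ ≤ Real.sqrt b * (‖Ω₀‖ * M) :=
    aux_opNorm_le b S (‖Ω₀‖ * M) (by positivity) hrowbound
  calc ‖∑ i : Fin (d + 1), B₀ ^ (i : ℕ) * C i‖ = ‖Ω₀⁻¹ * S‖ := by rw [hfact]
    _ ≤ ‖Ω₀⁻¹‖ * ‖S‖ := Matrix.l2_opNorm_mul _ _
    _ ≤ ‖Ω₀⁻¹‖ * (Real.sqrt b * (‖Ω₀‖ * M)) :=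
        mul_le_mul_of_nonneg_left hSbound (norm_nonneg _)
    _ = Real.sqrt b * ‖Ω₀⁻¹‖ * ‖Ω₀‖ * M := by ring
end

section
/- Let $\Lambda_1,\dots,\Lambda_d \in \mathbb{R}^{b\times b}$ be real diagonal matrices with pairwise disjoint spectra. Then the block matrix $M(\Omega_1,\dots,\Omega_d)$ with $(i,j)$-block $\Lambda_i^{j-1}\Omega_i$ (for invertible $\Omega_i \in \mathbb{R}^{b\times b}$) has nonzero determinant when all $\Omega_i = I_b$; consequently, since $\det M$ is a nonzero polynomial in the entries of $\Omega_1,\dots,\Omega_d$, the block Vandermonde matrix $\mathsf{Van}$ built from $B_i = \Omega_i^{-1}\Lambda_i\Omega_i$ is nonsingular for all $(\Omega_1,\dots,\Omega_d)$ outside a Lebesgue-null set. -/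
open Matrix MeasureTheory MvPolynomial

lemma measurable_mv_eval {ι : Type*} (p : MvPolynomial ι ℝ) :
    Measurable fun x : ι → ℝ => MvPolynomial.eval x p := by
  induction p using MvPolynomial.induction_on with
  | C a => simpa using measurable_const
  | add p q hp hq =>
    have h : Measurable fun x : ι → ℝ => MvPolynomial.eval x p + MvPolynomial.eval x q := hp.add hq
    simpa using h
  | mul_X p i hp =>
    have h : Measurable fun x : ι → ℝ => MvPolynomial.eval x p * x i := hp.mul (measurable_pi_apply i)
    simpa using h

lemma null_poly_fin : ∀ (n : ℕ) (p : MvPolynomial (Fin n) ℝ), p ≠ 0 →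
    volume {x : Fin n → ℝ | MvPolynomial.eval x p = 0} = 0 := by
  intro n
  induction n with
  | zero =>
    intro p hp
    obtain ⟨r, rfl⟩ := MvPolynomial.C_surjective (Fin 0) p
    have hr : r ≠ 0 := fun h => hp (by rw [h, map_zero])
    have : {x : Fin 0 → ℝ | MvPolynomial.eval x (MvPolynomial.C r) = 0} = ∅ := by
      ext x; simp [hr]
    rw [this]; simp
  | succ n ih =>
    intro p hp
    set pp : Polynomial (MvPolynomial (Fin n) ℝ) := MvPolynomial.finSuccEquiv ℝ n p with hpp
    have hpp0 : pp ≠ 0 := by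
      simp only [hpp, ne_eq, EmbeddingLike.map_eq_zero_iff]
      exact hp
    -- leading coefficient is nonzero
    have hlc : pp.leadingCoeff ≠ 0 := Polynomial.leadingCoeff_ne_zero.mpr hpp0
    -- bad set in tail variables
    have hZ : volume {y : Fin n → ℝ | MvPolynomial.eval y pp.leadingCoeff = 0} = 0 :=
      ih _ hlc
    -- the set in product form
    set T : Set (ℝ × (Fin n → ℝ)) :=
      {q | MvPolynomial.eval (Fin.cons q.1 q.2) p = 0} with hT
    have hTm : MeasurableSet T := by
      have hc : Measurable fun q : ℝ × (Fin n → ℝ) => (Fin.cons q.1 q.2 : Fin (n+1) → ℝ) := by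
        rw [measurable_pi_iff]
        intro i
        refine Fin.cases ?_ ?_ i
        · simpa using measurable_fst
        · intro j
          have h : Measurable fun q : ℝ × (Fin n → ℝ) => q.2 j := (measurable_pi_apply j).comp measurable_snd
          simpa using h
      exact ((measurable_mv_eval p).comp hc) (measurableSet_singleton 0)
    -- T' with swapped coordinates
    have hswap : ((volume : Measure ℝ).prod (volume : Measure (Fin n → ℝ))) T
        = ((volume : Measure (Fin n → ℝ)).prod (volume : Measure ℝ)) (Prod.swap ⁻¹' T) := by
      rw [← Measure.prod_swap, Measure.map_apply measurable_swap hTm]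
    have hT'0 : ((volume : Measure (Fin n → ℝ)).prod (volume : Measure ℝ)) (Prod.swap ⁻¹' T) = 0 := by
      rw [Measure.measure_prod_null (measurable_swap hTm)]
      have hsub : {y : Fin n → ℝ | ¬ (volume : Measure ℝ) (Prod.mk y ⁻¹' (Prod.swap ⁻¹' T)) = 0}
          ⊆ {y : Fin n → ℝ | MvPolynomial.eval y pp.leadingCoeff = 0} := by
        intro y hy
        by_contra hylc
        apply hy
        have hq0 : pp.map (MvPolynomial.eval y) ≠ 0 := by
          intro h
          apply hylc
          have h2 : (pp.map (MvPolynomial.eval y)).coeff pp.natDegree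
              = MvPolynomial.eval y (pp.coeff pp.natDegree) := Polynomial.coeff_map _ _
          rw [h, Polynomial.coeff_zero] at h2
          rw [Polynomial.leadingCoeff]
          exact h2.symm
        have : (Prod.mk y ⁻¹' (Prod.swap ⁻¹' T)) ⊆ {t : ℝ | (pp.map (MvPolynomial.eval y)).IsRoot t} := by
          intro t ht
          simp only [Set.mem_preimage, Prod.swap_prod_mk, hT, Set.mem_setOf_eq] at ht
          rw [MvPolynomial.eval_eq_eval_mv_eval'] at ht
          exact ht
        exact measure_mono_null this
          ((Polynomial.finite_setOf_isRoot hq0).countable.measure_zero _)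
      have h0 := measure_mono_null hsub hZ
      exact ae_iff.mpr (by simpa using h0)
    have hT0 : ((volume : Measure ℝ).prod (volume : Measure (Fin n → ℝ))) T = 0 := by
      rw [hswap]; exact hT'0
    have mp := volume_preserving_piFinSuccAbove (fun _ : Fin (n + 1) => ℝ) 0
    have hpre : (MeasurableEquiv.piFinSuccAbove (fun _ : Fin (n + 1) => ℝ) 0) ⁻¹' T
        = {x : Fin (n + 1) → ℝ | MvPolynomial.eval x p = 0} := by
      ext x
      simp only [Set.mem_preimage, MeasurableEquiv.piFinSuccAbove_apply, hT,
        Set.mem_setOf_eq, Fin.insertNthEquiv_zero, Fin.consEquiv_symm_apply, Fin.cons_self_tail]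
    calc volume {x : Fin (n + 1) → ℝ | MvPolynomial.eval x p = 0}
        = volume ((MeasurableEquiv.piFinSuccAbove (fun _ : Fin (n + 1) => ℝ) 0) ⁻¹' T) := by
          rw [hpre]
      _ = volume T := mp.measure_preimage hTm.nullMeasurableSet
      _ = 0 := by rw [MeasureTheory.Measure.volume_eq_prod]; exact hT0

lemma null_poly {ι : Type*} [Fintype ι] (p : MvPolynomial ι ℝ) (hp : p ≠ 0) :
    (Measure.pi fun _ : ι => (volume : Measure ℝ)) {x : ι → ℝ | MvPolynomial.eval x p = 0} = 0 := by
  classical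
  set n := Fintype.card ι
  set e : Fin n ≃ ι := (Fintype.equivFin ι).symm with he
  have mp := MeasureTheory.volume_measurePreserving_piCongrLeft (fun _ : ι => ℝ) e
  have hq : MvPolynomial.rename ⇑e.symm p ≠ 0 := by
    intro h
    apply hp
    have := congrArg (MvPolynomial.rename ⇑e) h
    rw [map_zero, MvPolynomial.rename_rename] at this
    simpa [Equiv.self_comp_symm] using this
  have hg : ∀ y : Fin n → ℝ, ((MeasurableEquiv.piCongrLeft (fun _ : ι => ℝ) e) y : ι → ℝ)
      = y ∘ ⇑e.symm := by
    intro y; funext i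
    rw [MeasurableEquiv.coe_piCongrLeft]
    have h2 := Equiv.piCongrLeft_apply_apply (fun _ : ι => ℝ) e y (e.symm i)
    simpa using h2
  have hpre : (MeasurableEquiv.piCongrLeft (fun _ : ι => ℝ) e) ⁻¹'
      {x : ι → ℝ | MvPolynomial.eval x p = 0}
      = {y : Fin n → ℝ | MvPolynomial.eval y (MvPolynomial.rename ⇑e.symm p) = 0} := by
    ext y
    simp only [Set.mem_preimage, Set.mem_setOf_eq, MvPolynomial.eval_rename, hg y]
  have hmeas : MeasurableSet {x : ι → ℝ | MvPolynomial.eval x p = 0} :=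
    (measurable_mv_eval p) (measurableSet_singleton 0)
  have := mp.measure_preimage hmeas.nullMeasurableSet
  rw [hpre] at this
  have h0 : volume {y : Fin n → ℝ | MvPolynomial.eval y (MvPolynomial.rename ⇑e.symm p) = 0} = 0 :=
    null_poly_fin n _ hq
  rw [h0] at this
  rw [show (Measure.pi fun _ : ι => (volume : Measure ℝ))
      = (volume : Measure (ι → ℝ)) from (MeasureTheory.volume_pi).symm]
  exact this.symm

lemma mp_uncurry (ι κ : Type*) [Fintype ι] [Fintype κ] :
    MeasurePreserving (fun (f : ι → κ → ℝ) (p : ι × κ) => f p.1 p.2)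
      (Measure.pi fun _ : ι => (Measure.pi fun _ : κ => (volume : Measure ℝ)))
      (Measure.pi fun _ : ι × κ => (volume : Measure ℝ)) := by
  classical
  have hmeas : Measurable (fun (f : ι → κ → ℝ) (p : ι × κ) => f p.1 p.2) := by
    rw [measurable_pi_iff]
    intro p
    exact (measurable_pi_apply p.2).comp (measurable_pi_apply p.1)
  refine ⟨hmeas, ?_⟩
  refine (Measure.pi_eq fun s hs => ?_).symm
  rw [Measure.map_apply hmeas (MeasurableSet.univ_pi hs)]
  have hpre : (fun (f : ι → κ → ℝ) (p : ι × κ) => f p.1 p.2) ⁻¹' Set.pi Set.univ s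
      = Set.pi Set.univ (fun i : ι => Set.pi Set.univ (fun j : κ => s (i, j))) := by
    ext f
    simp only [Set.mem_preimage, Set.mem_univ_pi, Prod.forall]
  rw [hpre, Measure.pi_pi]
  have : ∀ i : ι, (Measure.pi fun _ : κ => (volume : Measure ℝ))
      (Set.pi Set.univ fun j : κ => s (i, j)) = ∏ j : κ, volume (s (i, j)) := by
    intro i; rw [Measure.pi_pi]
  simp_rw [this]
  exact (Fintype.prod_prod_type (fun p : ι × κ => volume (s p))).symm

lemma blockA_eq (b d : ℕ) (μ : Fin d → Fin b → ℝ) :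
    (Matrix.of fun (p q : Fin d × Fin b) =>
        ((Matrix.diagonal (μ p.1) ^ (q.1 : ℕ) * (1 : Matrix (Fin b) (Fin b) ℝ)) p.2 q.2))
    = Matrix.blockDiagonal (fun k : Fin b => Matrix.vandermonde (fun i : Fin d => μ i k)) := by
  ext ⟨i, k⟩ ⟨j, l⟩
  simp only [Matrix.of_apply, Matrix.mul_one, Matrix.diagonal_pow, Matrix.diagonal_apply,
    Matrix.blockDiagonal_apply, Matrix.vandermonde_apply, Pi.pow_apply]

lemma part1 (b d : ℕ) (μ : Fin d → Fin b → ℝ)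
    (hμ : ∀ i j : Fin d, i ≠ j → ∀ k l : Fin b, μ i k ≠ μ j l) :
    (Matrix.of fun (p q : Fin d × Fin b) =>
        ((Matrix.diagonal (μ p.1) ^ (q.1 : ℕ) * (1 : Matrix (Fin b) (Fin b) ℝ))
          p.2 q.2)).det ≠ 0 := by
  rw [blockA_eq, Matrix.det_blockDiagonal]
  rw [Finset.prod_ne_zero_iff]
  intro k _
  rw [Matrix.det_vandermonde_ne_zero_iff]
  intro i j hij
  by_contra hne
  exact hμ i j hne k k hij

lemma conj_pow_mat {b : ℕ} (M Ω : Matrix (Fin b) (Fin b) ℝ) (h : IsUnit Ω.det) (n : ℕ) :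
    (Ω⁻¹ * M * Ω) ^ n = Ω⁻¹ * M ^ n * Ω := by
  induction n with
  | zero => simp [Matrix.nonsing_inv_mul Ω h]
  | succ n ih =>
    rw [pow_succ, ih, pow_succ]
    simp only [Matrix.mul_assoc]
    rw [Matrix.mul_nonsing_inv_cancel_left _ _ h]

/-- generic nonsingularity of the block Vandermonde matrix. With
pairwise disjoint diagonal spectra, the block matrix with `(i,j)`-block
`Λ_i^{j-1} Ω_i` has nonzero determinant at `Ω_i = I`, and the block Vandermonde
matrix built from `B_i = Ω_i⁻¹ Λ_i Ω_i` is nonsingular for all `(Ω_1, …, Ω_d)`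
outside a Lebesgue-null set (the entries of the `Ω_i` are the coordinates of the
Lebesgue measure space `Fin d → Fin b → Fin b → ℝ`). -/
theorem stmt_4 (b d : ℕ)
    (μ : Fin d → Fin b → ℝ)
    (hμ : ∀ i j : Fin d, i ≠ j → ∀ k l : Fin b, μ i k ≠ μ j l) :
    (Matrix.of fun (p q : Fin d × Fin b) =>
        ((Matrix.diagonal (μ p.1) ^ (q.1 : ℕ) * (1 : Matrix (Fin b) (Fin b) ℝ))
          p.2 q.2)).det ≠ 0 ∧
    ∃ N : Set (Fin d → Fin b → Fin b → ℝ),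
      volume N = 0 ∧
      ∀ Ω : Fin d → Fin b → Fin b → ℝ, Ω ∉ N →
        IsUnit (Matrix.of fun (p q : Fin d × Fin b) =>
          ((((Matrix.of (Ω p.1))⁻¹ * Matrix.diagonal (μ p.1) * Matrix.of (Ω p.1))
              ^ (q.1 : ℕ)) p.2 q.2)) := by
  classical
  refine ⟨part1 b d μ hμ, ?_⟩
  set PV : Matrix (Fin d × Fin b) (Fin d × Fin b) (MvPolynomial (Fin d × Fin b × Fin b) ℝ) :=
    Matrix.of fun p q => MvPolynomial.C ((μ p.1 p.2) ^ (q.1 : ℕ)) * MvPolynomial.X (p.1, p.2, q.2)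
    with hPVdef
  set PQ : Fin d → Matrix (Fin b) (Fin b) (MvPolynomial (Fin d × Fin b × Fin b) ℝ) :=
    fun i => Matrix.of fun k l => MvPolynomial.X (i, k, l) with hPQdef
  set F : MvPolynomial (Fin d × Fin b × Fin b) ℝ := PV.det * ∏ i, (PQ i).det with hFdef
  -- F is nonzero: evaluate at the "identity" point
  have hF : F ≠ 0 := by
    intro h
    set x1 : Fin d × Fin b × Fin b → ℝ := fun t => if t.2.1 = t.2.2 then (1 : ℝ) else 0 with hx1
    have h1 : MvPolynomial.eval x1 F = 0 := by rw [h, map_zero]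
    have hPV1 : PV.map (MvPolynomial.eval x1)
        = Matrix.of (fun (p q : Fin d × Fin b) =>
          ((Matrix.diagonal (μ p.1) ^ (q.1 : ℕ) * (1 : Matrix (Fin b) (Fin b) ℝ)) p.2 q.2)) := by
      ext p q
      simp [hPVdef, hx1, Matrix.diagonal_pow, Matrix.diagonal_apply, Matrix.one_apply, mul_ite, mul_one, mul_zero]
    have hPQ1 : ∀ i, (PQ i).map (MvPolynomial.eval x1) = (1 : Matrix (Fin b) (Fin b) ℝ) := by
      intro i
      ext k l
      simp [hPQdef, hx1, Matrix.one_apply]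
    rw [hFdef, _root_.map_mul, _root_.map_prod] at h1
    simp only [RingHom.map_det, RingHom.mapMatrix_apply] at h1
    rw [hPV1] at h1
    simp only [hPQ1, Matrix.det_one, Finset.prod_const_one, mul_one] at h1
    apply part1 b d μ hμ
    simpa using h1
  -- the measure-preserving flattening map
  have mpInner : MeasurePreserving (fun (f : Fin b → Fin b → ℝ) (p : Fin b × Fin b) => f p.1 p.2)
      (Measure.pi fun _ : Fin b => Measure.pi fun _ : Fin b => (volume : Measure ℝ))
      (Measure.pi fun _ : Fin b × Fin b => (volume : Measure ℝ)) := mp_uncurry _ _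
  have mpPi : MeasurePreserving
      (fun (Ω : Fin d → Fin b → Fin b → ℝ) (i : Fin d) (p : Fin b × Fin b) => Ω i p.1 p.2)
      (Measure.pi fun _ : Fin d =>
        (Measure.pi fun _ : Fin b => Measure.pi fun _ : Fin b => (volume : Measure ℝ)))
      (Measure.pi fun _ : Fin d => Measure.pi fun _ : Fin b × Fin b => (volume : Measure ℝ)) :=
    measurePreserving_pi _ _ (fun _ => mpInner)
  have mpOuter := mp_uncurry (Fin d) (Fin b × Fin b)
  have mpG : MeasurePreserving
      (fun (Ω : Fin d → Fin b → Fin b → ℝ) (t : Fin d × Fin b × Fin b) => Ω t.1 t.2.1 t.2.2)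
      (Measure.pi fun _ : Fin d =>
        (Measure.pi fun _ : Fin b => Measure.pi fun _ : Fin b => (volume : Measure ℝ)))
      (Measure.pi fun _ : Fin d × Fin b × Fin b => (volume : Measure ℝ)) := mpOuter.comp mpPi
  have hvol : (volume : Measure (Fin d → Fin b → Fin b → ℝ))
      = Measure.pi fun _ : Fin d =>
          (Measure.pi fun _ : Fin b => Measure.pi fun _ : Fin b => (volume : Measure ℝ)) := rfl
  set g : (Fin d → Fin b → Fin b → ℝ) → (Fin d × Fin b × Fin b → ℝ) :=
    fun Ω t => Ω t.1 t.2.1 t.2.2 with hg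
  refine ⟨g ⁻¹' {x | MvPolynomial.eval x F = 0}, ?_, ?_⟩
  · have hmeas : MeasurableSet {x : Fin d × Fin b × Fin b → ℝ | MvPolynomial.eval x F = 0} :=
      (measurable_mv_eval F) (measurableSet_singleton 0)
    rw [hvol]
    rw [mpG.measure_preimage hmeas.nullMeasurableSet]
    exact null_poly F hF
  · intro Ω hΩ
    have hev : MvPolynomial.eval (g Ω) F ≠ 0 := fun h => hΩ h
    rw [hFdef, _root_.map_mul, _root_.map_prod] at hev
    simp only [RingHom.map_det, RingHom.mapMatrix_apply] at hev
    have hV : (PV.map (MvPolynomial.eval (g Ω))).det ≠ 0 := fun h => hev (by rw [h, zero_mul])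
    have hQ : ∀ i, ((PQ i).map (MvPolynomial.eval (g Ω))).det ≠ 0 := by
      intro i hi
      apply hev
      rw [Finset.prod_eq_zero (Finset.mem_univ i) hi, mul_zero]
    have hPQev : ∀ i, (PQ i).map (MvPolynomial.eval (g Ω)) = Matrix.of (Ω i) := by
      intro i; ext k l; simp [hPQdef, hg]
    have hdet : ∀ i, IsUnit (Matrix.of (Ω i)).det := by
      intro i
      rw [isUnit_iff_ne_zero]
      intro h0
      exact hQ i (by rw [hPQev i, h0])
    -- factorization Van = L * V
    set L : Matrix (Fin d × Fin b) (Fin d × Fin b) ℝ :=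
      (Matrix.blockDiagonal fun i => (Matrix.of (Ω i))⁻¹).submatrix
        (Equiv.prodComm (Fin d) (Fin b)) (Equiv.prodComm (Fin d) (Fin b)) with hL
    set V : Matrix (Fin d × Fin b) (Fin d × Fin b) ℝ := PV.map (MvPolynomial.eval (g Ω)) with hVd
    have hfact : (Matrix.of fun (p q : Fin d × Fin b) =>
          ((((Matrix.of (Ω p.1))⁻¹ * Matrix.diagonal (μ p.1) * Matrix.of (Ω p.1))
              ^ (q.1 : ℕ)) p.2 q.2)) = L * V := by
      ext ⟨i, k⟩ ⟨j, l⟩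
      have hrhs : (L * V) ((i, k)) ((j, l))
          = ∑ m : Fin b, (Matrix.of (Ω i))⁻¹ k m * ((μ i m) ^ (j : ℕ) * Ω i m l) := by
        rw [Matrix.mul_apply, Fintype.sum_prod_type]
        rw [Finset.sum_eq_single i]
        · apply Finset.sum_congr rfl
          intro m _
          simp [hL, hVd, hPVdef, hg, Matrix.blockDiagonal_apply]
        · intro r _ hr
          apply Finset.sum_eq_zero
          intro m _
          simp [hL, hVd, Matrix.blockDiagonal_apply, Ne.symm hr]
        · intro h; exact absurd (Finset.mem_univ i) h
      rw [Matrix.of_apply, conj_pow_mat _ _ (hdet i), hrhs, Matrix.mul_apply]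
      apply Finset.sum_congr rfl
      intro m _
      rw [Matrix.diagonal_pow, Matrix.mul_diagonal]
      simp [mul_assoc, Pi.pow_apply]
    rw [Matrix.isUnit_iff_isUnit_det, hfact, Matrix.det_mul, isUnit_iff_ne_zero]
    apply mul_ne_zero _ hV
    rw [hL, Matrix.det_submatrix_equiv_self, Matrix.det_blockDiagonal]
    rw [Finset.prod_ne_zero_iff]
    intro i _
    exact ((Matrix.isUnit_nonsing_inv_det _ (hdet i))).ne_zero
end

section
/- Let $B_1,\dots,B_d \in \mathbb{R}^{b\times b}$ be such that the block Vandermonde matrix $\mathsf{Van} = (B_i^{j-1})_{1\le i,j\le d}$ is nonsingular. Then, for each $1\le k\le d$, there exists a unique matrix polynomial $F_k$ of degree at most $d-1$ over $\mathbb{R}^{b\times b}$ such that $F_k(B_j) = \delta_{kj} I$ for all $1 \le j \le d$. Moreover, every lambda-matrix $\Phi$ of degree at most $d-1$ satisfies the interpolation formula $\Phi(\lambda I) = \sum_{k=1}^d F_k(\lambda I)\,\Phi(B_k)$ for all real $\lambda$. -/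
open Matrix

/-- if the block Vandermonde matrix is nonsingular, then for every
`k` there is a unique fundamental matrix polynomial `F_k` of degree at most
`d-1` with `F_k(B_j) = δ_{kj} I`, and every lambda-matrix of degree at most
`d-1` satisfies the interpolation formula. -/
theorem stmt_6 (b d : ℕ)
    (B : Fin d → Matrix (Fin b) (Fin b) ℝ)
    (hVan : IsUnit (Matrix.of fun (p q : Fin d × Fin b) =>
      ((B p.1 ^ (q.1 : ℕ)) p.2 q.2))) :
    (∀ k : Fin d, ∃! F : Fin d → Matrix (Fin b) (Fin b) ℝ,
      ∀ j : Fin d, ∑ i : Fin d, (B j) ^ (i : ℕ) * F i =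
        if k = j then 1 else 0) ∧
    (∀ F : Fin d → Fin d → Matrix (Fin b) (Fin b) ℝ,
      (∀ k j : Fin d, ∑ i : Fin d, (B j) ^ (i : ℕ) * F k i =
        if k = j then 1 else 0) →
      ∀ (C : Fin d → Matrix (Fin b) (Fin b) ℝ) (lam : ℝ),
        ∑ i : Fin d, lam ^ (i : ℕ) • C i =
          ∑ k : Fin d, (∑ i : Fin d, lam ^ (i : ℕ) • F k i) *
            (∑ i : Fin d, (B k) ^ (i : ℕ) * C i)) := by
  set V : Matrix (Fin d × Fin b) (Fin d × Fin b) ℝ :=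
    Matrix.of fun (p q : Fin d × Fin b) => ((B p.1 ^ (q.1 : ℕ)) p.2 q.2) with hV
  have hdet : IsUnit V.det := (Matrix.isUnit_iff_isUnit_det V).mp hVan
  -- conversion lemma
  have key : ∀ (F : Fin d → Matrix (Fin b) (Fin b) ℝ) (j : Fin d) (r c : Fin b),
      (V * Matrix.of (fun (q : Fin d × Fin b) (c : Fin b) => F q.1 q.2 c)) (j, r) c
        = (∑ i : Fin d, (B j) ^ (i : ℕ) * F i) r c := by
    intro F j r c
    simp [Matrix.mul_apply, Matrix.sum_apply, Fintype.sum_prod_type, hV]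
  constructor
  · intro k
    set E : Matrix (Fin d × Fin b) (Fin b) ℝ :=
      Matrix.of fun p c => (if k = p.1 then (1 : Matrix (Fin b) (Fin b) ℝ) else 0) p.2 c with hE
    refine ⟨fun i => Matrix.of fun s c => (V⁻¹ * E) (i, s) c, ?_, ?_⟩
    · intro j
      ext r c
      have h1 : (Matrix.of (fun (q : Fin d × Fin b) (c : Fin b) =>
          (fun i => Matrix.of fun s c => (V⁻¹ * E) (i, s) c) q.1 q.2 c)) = V⁻¹ * E := by
        ext q c; rfl
      have := key (fun i => Matrix.of fun s c => (V⁻¹ * E) (i, s) c) j r c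
      rw [h1, ← Matrix.mul_assoc, Matrix.mul_nonsing_inv V hdet, Matrix.one_mul] at this
      rw [← this]
      simp [hE]
    · intro F' hF'
      have hXF' : V * Matrix.of (fun (q : Fin d × Fin b) (c : Fin b) => F' q.1 q.2 c) = E := by
        ext p c
        rw [show p = (p.1, p.2) from rfl, key F' p.1 p.2 c, hF' p.1]
        simp [hE]
      have hX : Matrix.of (fun (q : Fin d × Fin b) (c : Fin b) => F' q.1 q.2 c) = V⁻¹ * E := by
        rw [← hXF', ← Matrix.mul_assoc, Matrix.nonsing_inv_mul V hdet, Matrix.one_mul]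
      funext i
      ext s c
      have := congrFun (congrFun hX (i, s)) c
      exact this
  · intro F hF C lam
    set X : Matrix (Fin d × Fin b) (Fin d × Fin b) ℝ :=
      Matrix.of fun q p => F p.1 q.1 q.2 p.2 with hX
    have hVX : V * X = 1 := by
      ext p q
      have h1 : (V * X) p q = (∑ i : Fin d, (B p.1) ^ (i : ℕ) * F q.1 i) p.2 q.2 := by
        simp [Matrix.mul_apply, Matrix.sum_apply, Fintype.sum_prod_type, hV, hX]
      rw [h1, hF q.1 p.1]
      by_cases h : q.1 = p.1
      · simp [h, Matrix.one_apply, Prod.ext_iff]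
      · simp [h, Ne.symm h, Matrix.one_apply, Prod.ext_iff]
    have hXV : X * V = 1 := mul_eq_one_comm.mp hVX
    have hsum : ∀ i i' : Fin d, ∑ k : Fin d, F k i * (B k) ^ (i' : ℕ) =
        if i = i' then 1 else 0 := by
      intro i i'
      ext s s'
      have h := congrFun (congrFun hXV (i, s)) (i', s')
      have h2 : (X * V) (i, s) (i', s') = (∑ k : Fin d, F k i * (B k) ^ (i' : ℕ)) s s' := by
        simp [Matrix.mul_apply, Matrix.sum_apply, Fintype.sum_prod_type, hV, hX]
      rw [h2] at h
      rw [h]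
      by_cases hii : i = i' <;>
        simp [hii, Matrix.one_apply, Prod.ext_iff]
    calc ∑ i : Fin d, lam ^ (i : ℕ) • C i
        = ∑ i : Fin d, lam ^ (i : ℕ) •
            ∑ i' : Fin d, (∑ k : Fin d, F k i * (B k) ^ (i' : ℕ)) * C i' := by
          refine Finset.sum_congr rfl fun i _ => ?_
          simp only [hsum, ite_mul, one_mul, zero_mul]
          rw [Finset.sum_ite_eq]
          simp
      _ = ∑ k : Fin d, (∑ i : Fin d, lam ^ (i : ℕ) • F k i) *
            (∑ i : Fin d, (B k) ^ (i : ℕ) * C i) := by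
          have tri : ∀ (g : Fin d → Fin d → Fin d → Matrix (Fin b) (Fin b) ℝ),
              ∑ i : Fin d, ∑ i' : Fin d, ∑ k : Fin d, g i i' k
                = ∑ k : Fin d, ∑ i' : Fin d, ∑ i : Fin d, g i i' k := by
            intro g
            calc ∑ i : Fin d, ∑ i' : Fin d, ∑ k : Fin d, g i i' k
                = ∑ i' : Fin d, ∑ i : Fin d, ∑ k : Fin d, g i i' k := Finset.sum_comm
              _ = ∑ i' : Fin d, ∑ k : Fin d, ∑ i : Fin d, g i i' k :=
                  Finset.sum_congr rfl (fun i' _ => Finset.sum_comm)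
              _ = ∑ k : Fin d, ∑ i' : Fin d, ∑ i : Fin d, g i i' k := Finset.sum_comm
          simp only [Finset.sum_mul, Finset.mul_sum, Finset.smul_sum, smul_mul_assoc,
            mul_assoc]
          exact tri _
end

section
/- Let $B_1, B_2 \in \mathbb{R}^{b\times b}$ with $B_1 - B_2$ nonsingular. Then $\frac{3-\sqrt{5}}{2}\,\|(B_1-B_2)^{-1}\|^2 \le \left\|\begin{bmatrix} I & B_1 \\ I & B_2\end{bmatrix}^{-1}\right\|^2 \le \frac{3+\sqrt{5}}{2}\bigl(1 + (\|B_1\|^2 + 1)\|(B_1-B_2)^{-1}\|^2\bigr)$, where $\|\cdot\|$ is the spectral norm. -/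
open scoped Matrix.Norms.L2Operator
open Matrix

section Helpers

variable {m n : Type*} [Fintype m] [Fintype n]

private lemma opnorm_le [DecidableEq n] (A : Matrix m n ℝ) {c : ℝ} (hc : 0 ≤ c)
    (h : ∀ u : n → ℝ, ‖(EuclideanSpace.equiv m ℝ).symm (A *ᵥ u)‖ ≤
        c * ‖(EuclideanSpace.equiv n ℝ).symm u‖) :
    ‖A‖ ≤ c := by
  rw [Matrix.l2_opNorm_def]
  refine ContinuousLinearMap.opNorm_le_bound _ hc fun x => ?_
  exact h ((WithLp.equiv 2 (n → ℝ)) x)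

private lemma sq_split (u : m ⊕ n → ℝ) :
    ‖(EuclideanSpace.equiv (m ⊕ n) ℝ).symm u‖ ^ 2 =
      ‖(EuclideanSpace.equiv m ℝ).symm (u ∘ Sum.inl)‖ ^ 2 +
      ‖(EuclideanSpace.equiv n ℝ).symm (u ∘ Sum.inr)‖ ^ 2 := by
  simp only [EuclideanSpace.norm_eq]
  rw [Real.sq_sqrt (by positivity), Real.sq_sqrt (by positivity), Real.sq_sqrt (by positivity)]
  simp [Fintype.sum_sum_type]

private lemma mv_bound [DecidableEq n] (A : Matrix m n ℝ) (u : n → ℝ) :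
    ‖(EuclideanSpace.equiv m ℝ).symm (A *ᵥ u)‖ ≤
      ‖A‖ * ‖(EuclideanSpace.equiv n ℝ).symm u‖ :=
  Matrix.l2_opNorm_mulVec A ((EuclideanSpace.equiv n ℝ).symm u)

private lemma norm_one_le [DecidableEq n] : ‖(1 : Matrix n n ℝ)‖ ≤ 1 := by
  refine opnorm_le _ zero_le_one fun u => ?_
  simp [Matrix.one_mulVec]

private lemma sq_le_of_le_sqrt {x y : ℝ} (hx : 0 ≤ x) (hy : 0 ≤ y)
    (hxy : x ≤ Real.sqrt y) : x ^ 2 ≤ y := by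
  nlinarith [Real.sq_sqrt hy, Real.sqrt_nonneg y]

/-- the (2,2) block has norm at most the norm of the whole matrix. -/
private lemma block_le [DecidableEq m] [DecidableEq n]
    (A : Matrix m m ℝ) (B : Matrix m n ℝ) (C : Matrix n m ℝ) (D : Matrix n n ℝ) :
    ‖D‖ ≤ ‖fromBlocks A B C D‖ := by
  refine opnorm_le _ (norm_nonneg _) fun u => ?_
  have h1 := mv_bound (fromBlocks A B C D) (Sum.elim 0 u)
  have h2 : (fromBlocks A B C D) *ᵥ (Sum.elim (0 : m → ℝ) u) =
      Sum.elim (B *ᵥ u) (D *ᵥ u) := by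
    rw [Matrix.fromBlocks_mulVec]; simp
  rw [h2] at h1
  have h3 : ‖(EuclideanSpace.equiv (m ⊕ n) ℝ).symm (Sum.elim (B *ᵥ u) (D *ᵥ u))‖ ^ 2 =
      ‖(EuclideanSpace.equiv m ℝ).symm (B *ᵥ u)‖ ^ 2 +
      ‖(EuclideanSpace.equiv n ℝ).symm (D *ᵥ u)‖ ^ 2 := by
    rw [sq_split]; simp
  have h4 : ‖(EuclideanSpace.equiv (m ⊕ n) ℝ).symm (Sum.elim (0 : m → ℝ) u)‖ =
      ‖(EuclideanSpace.equiv n ℝ).symm u‖ := by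
    rw [← sq_eq_sq₀ (norm_nonneg _) (norm_nonneg _), sq_split]; simp
  rw [h4] at h1
  nlinarith [norm_nonneg ((EuclideanSpace.equiv m ℝ).symm (B *ᵥ u)),
    norm_nonneg ((EuclideanSpace.equiv n ℝ).symm (D *ᵥ u)),
    norm_nonneg ((EuclideanSpace.equiv (m ⊕ n) ℝ).symm (Sum.elim (B *ᵥ u) (D *ᵥ u))),
    mul_nonneg (norm_nonneg (fromBlocks A B C D)) (norm_nonneg ((EuclideanSpace.equiv n ℝ).symm u))]

/-- norm bound for a block upper triangular matrix. -/
private lemma upper_tri_le [DecidableEq m] [DecidableEq n]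
    (A : Matrix m m ℝ) (B : Matrix m n ℝ) (C : Matrix n n ℝ) :
    ‖fromBlocks A B 0 C‖ ≤ Real.sqrt (‖A‖ ^ 2 + ‖B‖ ^ 2 + ‖C‖ ^ 2) := by
  refine opnorm_le _ (Real.sqrt_nonneg _) fun u => ?_
  set u₁ : m → ℝ := u ∘ Sum.inl
  set u₂ : n → ℝ := u ∘ Sum.inr
  have hu : u = Sum.elim u₁ u₂ := (Sum.elim_comp_inl_inr u).symm
  have h2 : (fromBlocks A B 0 C) *ᵥ u = Sum.elim (A *ᵥ u₁ + B *ᵥ u₂) (C *ᵥ u₂) := by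
    rw [hu, Matrix.fromBlocks_mulVec]; simp
  rw [h2]
  have hsq : ‖(EuclideanSpace.equiv (m ⊕ n) ℝ).symm
        (Sum.elim (A *ᵥ u₁ + B *ᵥ u₂) (C *ᵥ u₂))‖ ^ 2 =
      ‖(EuclideanSpace.equiv m ℝ).symm (A *ᵥ u₁ + B *ᵥ u₂)‖ ^ 2 +
      ‖(EuclideanSpace.equiv n ℝ).symm (C *ᵥ u₂)‖ ^ 2 := by
    rw [sq_split]; simp
  have husq : ‖(EuclideanSpace.equiv (m ⊕ n) ℝ).symm u‖ ^ 2 =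
      ‖(EuclideanSpace.equiv m ℝ).symm u₁‖ ^ 2 +
      ‖(EuclideanSpace.equiv n ℝ).symm u₂‖ ^ 2 := sq_split u
  have hv : ‖(EuclideanSpace.equiv m ℝ).symm (A *ᵥ u₁ + B *ᵥ u₂)‖ ≤
      ‖A‖ * ‖(EuclideanSpace.equiv m ℝ).symm u₁‖ +
      ‖B‖ * ‖(EuclideanSpace.equiv n ℝ).symm u₂‖ := by
    calc ‖(EuclideanSpace.equiv m ℝ).symm (A *ᵥ u₁ + B *ᵥ u₂)‖
        = ‖(EuclideanSpace.equiv m ℝ).symm (A *ᵥ u₁) +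
            (EuclideanSpace.equiv m ℝ).symm (B *ᵥ u₂)‖ := by rw [map_add]
      _ ≤ _ := (norm_add_le _ _).trans (add_le_add (mv_bound A u₁) (mv_bound B u₂))
  have hw := mv_bound C u₂
  rw [show Real.sqrt (‖A‖ ^ 2 + ‖B‖ ^ 2 + ‖C‖ ^ 2) * ‖(EuclideanSpace.equiv (m ⊕ n) ℝ).symm u‖
      = Real.sqrt ((‖A‖ ^ 2 + ‖B‖ ^ 2 + ‖C‖ ^ 2) * ‖(EuclideanSpace.equiv (m ⊕ n) ℝ).symm u‖ ^ 2)
      from by rw [Real.sqrt_mul (by positivity), Real.sqrt_sq (norm_nonneg _)]]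
  rw [Real.le_sqrt (norm_nonneg _) (by positivity)]
  rw [hsq, husq]
  nlinarith [norm_nonneg ((EuclideanSpace.equiv m ℝ).symm (A *ᵥ u₁ + B *ᵥ u₂)),
    norm_nonneg ((EuclideanSpace.equiv n ℝ).symm (C *ᵥ u₂)),
    norm_nonneg ((EuclideanSpace.equiv m ℝ).symm u₁),
    norm_nonneg ((EuclideanSpace.equiv n ℝ).symm u₂),
    norm_nonneg A, norm_nonneg B, norm_nonneg C,
    sq_nonneg (‖A‖ * ‖(EuclideanSpace.equiv n ℝ).symm u₂‖ -
      ‖B‖ * ‖(EuclideanSpace.equiv m ℝ).symm u₁‖),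
    sq_nonneg (‖C‖ * ‖(EuclideanSpace.equiv m ℝ).symm u₁‖)]

/-- golden-ratio bound for the unit lower triangular block matrix. -/
private lemma lower_tri_le [DecidableEq m] [DecidableEq n]
    (C : Matrix n m ℝ) (hC : ‖C‖ ≤ 1) :
    ‖fromBlocks (1 : Matrix m m ℝ) 0 C (1 : Matrix n n ℝ)‖ ≤
      Real.sqrt ((3 + Real.sqrt 5) / 2) := by
  refine opnorm_le _ (Real.sqrt_nonneg _) fun u => ?_
  set u₁ : m → ℝ := u ∘ Sum.inl
  set u₂ : n → ℝ := u ∘ Sum.inr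
  have hu : u = Sum.elim u₁ u₂ := (Sum.elim_comp_inl_inr u).symm
  have h2 : (fromBlocks (1 : Matrix m m ℝ) 0 C 1) *ᵥ u = Sum.elim u₁ (C *ᵥ u₁ + u₂) := by
    rw [hu, Matrix.fromBlocks_mulVec]; simp [Matrix.one_mulVec]
  rw [h2]
  have hsq : ‖(EuclideanSpace.equiv (m ⊕ n) ℝ).symm (Sum.elim u₁ (C *ᵥ u₁ + u₂))‖ ^ 2 =
      ‖(EuclideanSpace.equiv m ℝ).symm u₁‖ ^ 2 +
      ‖(EuclideanSpace.equiv n ℝ).symm (C *ᵥ u₁ + u₂)‖ ^ 2 := by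
    rw [sq_split]; simp
  have husq : ‖(EuclideanSpace.equiv (m ⊕ n) ℝ).symm u‖ ^ 2 =
      ‖(EuclideanSpace.equiv m ℝ).symm u₁‖ ^ 2 +
      ‖(EuclideanSpace.equiv n ℝ).symm u₂‖ ^ 2 := sq_split u
  have hw : ‖(EuclideanSpace.equiv n ℝ).symm (C *ᵥ u₁ + u₂)‖ ≤
      ‖(EuclideanSpace.equiv m ℝ).symm u₁‖ + ‖(EuclideanSpace.equiv n ℝ).symm u₂‖ := by
    calc ‖(EuclideanSpace.equiv n ℝ).symm (C *ᵥ u₁ + u₂)‖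
        = ‖(EuclideanSpace.equiv n ℝ).symm (C *ᵥ u₁) +
            (EuclideanSpace.equiv n ℝ).symm u₂‖ := by rw [map_add]
      _ ≤ ‖(EuclideanSpace.equiv n ℝ).symm (C *ᵥ u₁)‖ +
            ‖(EuclideanSpace.equiv n ℝ).symm u₂‖ := norm_add_le _ _
      _ ≤ _ := by
          have h3 := mv_bound C u₁
          have h4 : ‖C‖ * ‖(EuclideanSpace.equiv m ℝ).symm u₁‖ ≤
              ‖(EuclideanSpace.equiv m ℝ).symm u₁‖ := by
            nlinarith [norm_nonneg ((EuclideanSpace.equiv m ℝ).symm u₁), norm_nonneg C]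
          linarith
  rw [show Real.sqrt ((3 + Real.sqrt 5) / 2) * ‖(EuclideanSpace.equiv (m ⊕ n) ℝ).symm u‖
      = Real.sqrt ((3 + Real.sqrt 5) / 2 * ‖(EuclideanSpace.equiv (m ⊕ n) ℝ).symm u‖ ^ 2)
      from by rw [Real.sqrt_mul (by positivity), Real.sqrt_sq (norm_nonneg _)]]
  rw [Real.le_sqrt (norm_nonneg _) (by positivity)]
  rw [hsq, husq]
  set a := ‖(EuclideanSpace.equiv m ℝ).symm u₁‖ with ha
  set c := ‖(EuclideanSpace.equiv n ℝ).symm u₂‖ with hc'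
  set w := ‖(EuclideanSpace.equiv n ℝ).symm (C *ᵥ u₁ + u₂)‖ with hw'
  have han : 0 ≤ a := norm_nonneg _
  have hcn : 0 ≤ c := norm_nonneg _
  have hwn : 0 ≤ w := norm_nonneg _
  have hww : w ^ 2 ≤ (a + c) ^ 2 := by nlinarith
  set s := Real.sqrt 5 with hs
  have h5 : s ^ 2 = 5 := Real.sq_sqrt (by norm_num)
  have h6 : (2:ℝ) ≤ s := by nlinarith [Real.sqrt_nonneg 5]
  have e1 : (s - 1) * ((s - 1) * a ^ 2 - 4 * a * c + (s + 1) * c ^ 2) =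
      ((s - 1) * a - 2 * c) ^ 2 := by linear_combination (c ^ 2) * h5
  have e2 : (0:ℝ) < s - 1 := by linarith
  have e3 : 0 ≤ (s - 1) * a ^ 2 - 4 * a * c + (s + 1) * c ^ 2 := by
    nlinarith [sq_nonneg ((s - 1) * a - 2 * c)]
  nlinarith

end Helpers

set_option maxHeartbeats 1000000 in
/-- two-sided spectral norm bound for the inverse of the 2-block
Vandermonde matrix in terms of `‖(B₁ - B₂)⁻¹‖`. -/
theorem stmt_7 (b : ℕ)
    (B₁ B₂ : Matrix (Fin b) (Fin b) ℝ) (h : IsUnit (B₁ - B₂)) :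
    (3 - Real.sqrt 5) / 2 * ‖(B₁ - B₂)⁻¹‖ ^ 2 ≤
      ‖(Matrix.fromBlocks (1 : Matrix (Fin b) (Fin b) ℝ) B₁ 1 B₂)⁻¹‖ ^ 2 ∧
    ‖(Matrix.fromBlocks (1 : Matrix (Fin b) (Fin b) ℝ) B₁ 1 B₂)⁻¹‖ ^ 2 ≤
      (3 + Real.sqrt 5) / 2 * (1 + (‖B₁‖ ^ 2 + 1) * ‖(B₁ - B₂)⁻¹‖ ^ 2) := by
  set D : Matrix (Fin b) (Fin b) ℝ := B₁ - B₂ with hD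
  have hDet : IsUnit D.det := (Matrix.isUnit_iff_isUnit_det D).mp h
  have hDD : D * D⁻¹ = 1 := Matrix.mul_nonsing_inv D hDet
  have key : B₁ * D⁻¹ - B₂ * D⁻¹ = 1 := by rw [← sub_mul, ← hD]; exact hDD
  have k2 : B₂ * D⁻¹ = B₁ * D⁻¹ - 1 := by rw [← key]; abel
  set M : Matrix (Fin b ⊕ Fin b) (Fin b ⊕ Fin b) ℝ := fromBlocks 1 B₁ 1 B₂ with hM
  set U : Matrix (Fin b ⊕ Fin b) (Fin b ⊕ Fin b) ℝ :=
    fromBlocks 1 (B₁ * D⁻¹) 0 (-D⁻¹) with hU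
  set L : Matrix (Fin b ⊕ Fin b) (Fin b ⊕ Fin b) ℝ := fromBlocks 1 0 (-1) 1 with hL
  set L' : Matrix (Fin b ⊕ Fin b) (Fin b ⊕ Fin b) ℝ := fromBlocks 1 0 1 1 with hL'
  have hULeq : U * L = fromBlocks (1 - B₁ * D⁻¹) (B₁ * D⁻¹) D⁻¹ (-D⁻¹) := by
    rw [hU, hL, Matrix.fromBlocks_multiply, Matrix.fromBlocks_inj]
    refine ⟨?_, ?_, ?_, ?_⟩ <;> simp [mul_neg, neg_neg] <;> abel
  have hMN : M * (U * L) = 1 := by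
    rw [hULeq, hM, Matrix.fromBlocks_multiply, ← Matrix.fromBlocks_one]
    rw [Matrix.fromBlocks_inj]
    refine ⟨?_, ?_, ?_, ?_⟩ <;>
      simp [Matrix.mul_sub, Matrix.mul_one, mul_neg, k2] <;> abel
  have hMinv : M⁻¹ = U * L := Matrix.inv_eq_right_inv hMN
  have hLL' : L * L' = 1 := by
    rw [hL, hL', Matrix.fromBlocks_multiply, ← Matrix.fromBlocks_one, Matrix.fromBlocks_inj]
    refine ⟨?_, ?_, ?_, ?_⟩ <;> simp
  have hUeq : U = M⁻¹ * L' := by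
    rw [hMinv, Matrix.mul_assoc, hLL', Matrix.mul_one]
  -- basic norm facts
  have h5 : Real.sqrt 5 ^ 2 = 5 := Real.sq_sqrt (by norm_num)
  have h5n : (0:ℝ) ≤ Real.sqrt 5 := Real.sqrt_nonneg 5
  have hone : ‖(1 : Matrix (Fin b) (Fin b) ℝ)‖ ≤ 1 := norm_one_le
  have hnegone : ‖(-1 : Matrix (Fin b) (Fin b) ℝ)‖ ≤ 1 := by rw [norm_neg]; exact hone
  have hLnorm : ‖L‖ ≤ Real.sqrt ((3 + Real.sqrt 5) / 2) := lower_tri_le _ hnegone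
  have hL'norm : ‖L'‖ ≤ Real.sqrt ((3 + Real.sqrt 5) / 2) := lower_tri_le _ hone
  have hUnorm : ‖U‖ ≤ Real.sqrt (‖(1 : Matrix (Fin b) (Fin b) ℝ)‖ ^ 2 + ‖B₁ * D⁻¹‖ ^ 2 +
      ‖(-D⁻¹ : Matrix (Fin b) (Fin b) ℝ)‖ ^ 2) := upper_tri_le _ _ _
  have hBD : ‖B₁ * D⁻¹‖ ≤ ‖B₁‖ * ‖D⁻¹‖ := Matrix.l2_opNorm_mul B₁ D⁻¹
  have hDinvU : ‖D⁻¹‖ ≤ ‖U‖ := by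
    have := block_le (1 : Matrix (Fin b) (Fin b) ℝ) (B₁ * D⁻¹) 0 (-D⁻¹)
    rwa [norm_neg, ← hU] at this
  have hMinvNorm : ‖M⁻¹‖ ≤ ‖U‖ * ‖L‖ := by
    rw [hMinv]; exact Matrix.l2_opNorm_mul U L
  have hUMinv : ‖U‖ ≤ ‖M⁻¹‖ * ‖L'‖ := by
    rw [hUeq]; exact Matrix.l2_opNorm_mul M⁻¹ L'
  have hsqL : ‖L‖ ^ 2 ≤ (3 + Real.sqrt 5) / 2 :=
    sq_le_of_le_sqrt (norm_nonneg _) (by positivity) hLnorm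
  have hsqL' : ‖L'‖ ^ 2 ≤ (3 + Real.sqrt 5) / 2 :=
    sq_le_of_le_sqrt (norm_nonneg _) (by positivity) hL'norm
  have hsqU : ‖U‖ ^ 2 ≤ 1 + (‖B₁‖ ^ 2 + 1) * ‖D⁻¹‖ ^ 2 := by
    have hs : ‖U‖ ^ 2 ≤ ‖(1 : Matrix (Fin b) (Fin b) ℝ)‖ ^ 2 + ‖B₁ * D⁻¹‖ ^ 2 +
        ‖(-D⁻¹ : Matrix (Fin b) (Fin b) ℝ)‖ ^ 2 :=
      sq_le_of_le_sqrt (norm_nonneg _) (by positivity) hUnorm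
    rw [norm_neg] at hs
    have hBDn : (0:ℝ) ≤ ‖B₁ * D⁻¹‖ := norm_nonneg _
    have hB₁n : (0:ℝ) ≤ ‖B₁‖ := norm_nonneg _
    have hDn : (0:ℝ) ≤ ‖D⁻¹‖ := norm_nonneg _
    have hone2 : ‖(1 : Matrix (Fin b) (Fin b) ℝ)‖ ^ 2 ≤ 1 := by
      nlinarith [norm_nonneg (1 : Matrix (Fin b) (Fin b) ℝ)]
    nlinarith
  constructor
  · -- lower bound
    have h1 : ‖D⁻¹‖ ≤ ‖M⁻¹‖ * Real.sqrt ((3 + Real.sqrt 5) / 2) := by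
      calc ‖D⁻¹‖ ≤ ‖U‖ := hDinvU
        _ ≤ ‖M⁻¹‖ * ‖L'‖ := hUMinv
        _ ≤ ‖M⁻¹‖ * Real.sqrt ((3 + Real.sqrt 5) / 2) :=
            mul_le_mul_of_nonneg_left hL'norm (norm_nonneg _)
    have h2 : ‖D⁻¹‖ ^ 2 ≤ ‖M⁻¹‖ ^ 2 * ((3 + Real.sqrt 5) / 2) := by
      have h2' := pow_le_pow_left₀ (norm_nonneg _) h1 2
      rwa [mul_pow, Real.sq_sqrt (show (0:ℝ) ≤ (3 + Real.sqrt 5) / 2 by positivity)] at h2'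
    have hs3 : Real.sqrt 5 ≤ 3 := by nlinarith
    have h3 : (3 - Real.sqrt 5) / 2 * ‖D⁻¹‖ ^ 2 ≤
        (3 - Real.sqrt 5) / 2 * (‖M⁻¹‖ ^ 2 * ((3 + Real.sqrt 5) / 2)) :=
      mul_le_mul_of_nonneg_left h2 (by linarith)
    have h4 : (3 - Real.sqrt 5) / 2 * (‖M⁻¹‖ ^ 2 * ((3 + Real.sqrt 5) / 2)) = ‖M⁻¹‖ ^ 2 := by
      linear_combination (-(‖M⁻¹‖ ^ 2) / 4) * h5
    linarith
  · -- upper bound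
    have h1 : ‖M⁻¹‖ ^ 2 ≤ ‖U‖ ^ 2 * ‖L‖ ^ 2 := by
      have h1' := pow_le_pow_left₀ (norm_nonneg _) hMinvNorm 2
      rwa [mul_pow] at h1'
    have hP : (0:ℝ) ≤ 1 + (‖B₁‖ ^ 2 + 1) * ‖D⁻¹‖ ^ 2 := by positivity
    calc ‖M⁻¹‖ ^ 2 ≤ ‖U‖ ^ 2 * ‖L‖ ^ 2 := h1
      _ ≤ (1 + (‖B₁‖ ^ 2 + 1) * ‖D⁻¹‖ ^ 2) * ‖L‖ ^ 2 :=
          mul_le_mul_of_nonneg_right hsqU (sq_nonneg _)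
      _ ≤ (1 + (‖B₁‖ ^ 2 + 1) * ‖D⁻¹‖ ^ 2) * ((3 + Real.sqrt 5) / 2) :=
          mul_le_mul_of_nonneg_left hsqL hP
      _ = (3 + Real.sqrt 5) / 2 * (1 + (‖B₁‖ ^ 2 + 1) * ‖D⁻¹‖ ^ 2) := mul_comm _ _
end

section
/- Let $A \in \mathbb{R}^{n\times n}$ be symmetric, let $\widetilde{\lambda}$ be an eigenvalue of $A$ whose eigenspace has dimension greater than $b$, with orthonormal basis $\widetilde{Q}$, and let $\Omega \in \mathbb{R}^{n\times b}$. Then for every $\ell \ge 1$, the dimension of the intersection of $\mathrm{range}(\widetilde{Q})$ with the block Krylov subspace $\mathcal{K}_\ell(A,\Omega) = \mathrm{range}[\Omega, A\Omega, \dots, A^{\ell-1}\Omega]$ is at most $b$. In particular, the block Krylov subspace never contains the full eigenspace of $\widetilde{\lambda}$. -/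
open Matrix

/-- the block Krylov subspace generated by `Ω ∈ ℝ^{n×b}` meets the
eigenspace of any eigenvalue `λ̃` of a symmetric `A` in a subspace of dimension
at most `b`; in particular, if that eigenspace has dimension greater than `b`,
the Krylov subspace never contains it. -/
theorem stmt_10 (n b ℓ : ℕ) (hℓ : 1 ≤ ℓ)
    (A : Matrix (Fin n) (Fin n) ℝ) (hA : A.IsSymm)
    (lam : ℝ)
    (hdim : b < Module.finrank ℝ (Module.End.eigenspace A.mulVecLin lam))
    (Ω : Matrix (Fin n) (Fin b) ℝ) :
    Module.finrank ℝ
      ↥(Module.End.eigenspace A.mulVecLin lam ⊓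
        Submodule.span ℝ {v : Fin n → ℝ |
          ∃ i < ℓ, ∃ j : Fin b, v = (A ^ i) *ᵥ (fun r => Ω r j)}) ≤ b ∧
    ¬ (Module.End.eigenspace A.mulVecLin lam ≤
        Submodule.span ℝ {v : Fin n → ℝ |
          ∃ i < ℓ, ∃ j : Fin b, v = (A ^ i) *ᵥ (fun r => Ω r j)}) := by
  classical
  set T := A.mulVecLin with hT
  set E := Module.End.eigenspace T lam with hE
  set S := {v : Fin n → ℝ | ∃ i < ℓ, ∃ j : Fin b, v = (A ^ i) *ᵥ (fun r => Ω r j)} with hS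
  set K := Submodule.span ℝ S with hK
  -- the operator L = T - lam • id
  set L : (Fin n → ℝ) →ₗ[ℝ] (Fin n → ℝ) := T - lam • LinearMap.id with hL
  have hLapp : ∀ x : Fin n → ℝ, L x = A *ᵥ x - lam • x := by
    intro x; simp [hL, hT, Matrix.mulVecLin_apply]
  have hEker : E = LinearMap.ker L := by
    ext x
    rw [hE, Module.End.mem_eigenspace_iff, LinearMap.mem_ker, hLapp, sub_eq_zero]
    simp [hT, Matrix.mulVecLin_apply]
  -- symmetry of L wrt dot product
  have hsym : ∀ u w : Fin n → ℝ, (L u) ⬝ᵥ w = u ⬝ᵥ (L w) := by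
    intro u w
    have h1 : (A *ᵥ u) ⬝ᵥ w = u ⬝ᵥ (A *ᵥ w) := by
      rw [dotProduct_mulVec, ← vecMul_transpose, hA.eq]
    simp only [hLapp, sub_dotProduct, dotProduct_sub, smul_dotProduct, dotProduct_smul, h1]
  -- ker L and range L are complementary
  have hdisj : Disjoint (LinearMap.ker L) (LinearMap.range L) := by
    rw [Submodule.disjoint_def]
    rintro v hvk ⟨w, rfl⟩
    have : (L w) ⬝ᵥ (L w) = 0 := by
      rw [hsym]
      rw [LinearMap.mem_ker] at hvk
      rw [hvk, dotProduct_zero]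
    exact dotProduct_self_eq_zero.mp this
  have hcompl : IsCompl (LinearMap.ker L) (LinearMap.range L) := by
    constructor
    · exact hdisj
    · rw [codisjoint_iff]
      apply Submodule.eq_top_of_finrank_eq
      have h1 := Submodule.finrank_sup_add_finrank_inf_eq (LinearMap.ker L) (LinearMap.range L)
      rw [disjoint_iff.mp hdisj] at h1
      have h2 := LinearMap.finrank_range_add_finrank_ker L
      simp only [finrank_bot, add_zero] at h1
      omega
  -- the projection onto ker L along range L
  set Q : (Fin n → ℝ) →ₗ[ℝ] (Fin n → ℝ) :=
    (LinearMap.ker L).subtype ∘ₗ Submodule.projectionOnto _ _ hcompl with hQ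
  have hQid : ∀ x ∈ LinearMap.ker L, Q x = x := by
    intro x hx
    simp [hQ, Submodule.projectionOnto_apply_of_mem_left hcompl hx]
  have hQzero : ∀ x ∈ LinearMap.range L, Q x = 0 := by
    intro x hx
    simp [hQ, Submodule.projectionOnto_apply_of_mem_right hcompl hx]
  -- Q (A *ᵥ x) = lam • Q x
  have hQA : ∀ x : Fin n → ℝ, Q (A *ᵥ x) = lam • Q x := by
    intro x
    have : A *ᵥ x = L x + lam • x := by rw [hLapp]; abel
    rw [this, map_add, _root_.map_smul, hQzero (L x) ⟨x, rfl⟩, zero_add]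
  have hQpow : ∀ (i : ℕ) (x : Fin n → ℝ), Q ((A ^ i) *ᵥ x) = lam ^ i • Q x := by
    intro i
    induction i with
    | zero => intro x; simp
    | succ k ih =>
      intro x
      rw [pow_succ', ← mulVec_mulVec, hQA, ih, pow_succ']; module
  -- the target small space
  set W := Submodule.span ℝ (Set.range fun j : Fin b => Q (fun r => Ω r j)) with hW
  have hsub : E ⊓ K ≤ W := by
    rintro v ⟨hvE, hvK⟩
    have hv : Q v = v := hQid v (hEker ▸ hvE)
    have : Q v ∈ Submodule.map Q K := ⟨v, hvK, rfl⟩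
    rw [hK, Submodule.map_span] at this
    rw [← hv]
    refine Submodule.span_le.mpr ?_ this
    rintro _ ⟨u, ⟨i, _, j, rfl⟩, rfl⟩
    rw [hQpow]
    exact Submodule.smul_mem _ _ (Submodule.subset_span ⟨j, rfl⟩)
  have hWfin : Module.finrank ℝ W ≤ b := by
    refine (finrank_span_le_card _).trans ?_
    rw [Set.toFinset_range]
    exact (Finset.card_image_le).trans (by simp)
  have key : Module.finrank ℝ ↥(E ⊓ K) ≤ b :=
    (Submodule.finrank_mono hsub).trans hWfin
  refine ⟨key, fun hle => ?_⟩
  rw [inf_eq_left.mpr hle] at key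
  omega
end

section
/- Let $\Phi$ be a lambda-matrix of degree at most $d-1$ over $\mathbb{R}^{b\times b}$ and let $B_1,\dots,B_d \in \mathbb{R}^{b\times b}$ be such that fundamental matrix polynomials $F_k$ with $F_k(B_j) = \delta_{kj}I$ exist. Then for every real $\lambda$, $\|\Phi(\lambda I)\| \le \sqrt{d}\;\bigl\|[\Phi(B_1)^{\mathsf{T}},\dots,\Phi(B_d)^{\mathsf{T}}]^{\mathsf{T}}\bigr\| \; \max_{1\le k\le d}\|F_k(\lambda I)\|$, where the middle factor is the spectral norm of the vertically stacked $bd \times b$ matrix. -/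
open scoped Matrix.Norms.L2Operator
open Matrix

/-- interpolation norm bound. If `F_k` are fundamental matrix
polynomials for `B_1, …, B_d` (`F_k(B_j) = δ_{kj} I`), then every lambda-matrix
`Φ` of degree at most `d-1` satisfies, for every real `λ`,
`‖Φ(λI)‖ ≤ √d · ‖[Φ(B_1)ᵀ, …, Φ(B_d)ᵀ]ᵀ‖ · max_k ‖F_k(λI)‖`. -/
theorem stmt_17 (b d : ℕ) [NeZero d]
    (B : Fin d → Matrix (Fin b) (Fin b) ℝ)
    (F : Fin d → Fin d → Matrix (Fin b) (Fin b) ℝ)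
    (hF : ∀ k j : Fin d, ∑ i : Fin d, (B j) ^ (i : ℕ) * F k i =
      if k = j then 1 else 0)
    (C : Fin d → Matrix (Fin b) (Fin b) ℝ) (lam : ℝ) :
    ‖∑ i : Fin d, lam ^ (i : ℕ) • C i‖ ≤
      Real.sqrt d *
        ‖Matrix.of (fun (p : Fin d × Fin b) (q : Fin b) =>
          (∑ i : Fin d, (B p.1) ^ (i : ℕ) * C i) p.2 q)‖ *
        ⨆ k : Fin d, ‖∑ i : Fin d, lam ^ (i : ℕ) • F k i‖ := by
  classical
  set Y : Fin d → Matrix (Fin b) (Fin b) ℝ := fun k => ∑ j : Fin d, (B k) ^ (j : ℕ) * C j with hY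
  set M : Fin d → Matrix (Fin b) (Fin b) ℝ := fun k => ∑ i : Fin d, lam ^ (i : ℕ) • F k i with hM
  -- big matrices
  set V : Matrix (Fin d × Fin b) (Fin d × Fin b) ℝ :=
    Matrix.of fun p q => ((B p.1) ^ (q.1 : ℕ)) p.2 q.2 with hV
  set W : Matrix (Fin d × Fin b) (Fin d × Fin b) ℝ :=
    Matrix.of fun p q => (F q.1 p.1) p.2 q.2 with hW
  have hVW : V * W = 1 := by
    ext ⟨j, r⟩ ⟨k, s⟩
    have h := congrFun (congrFun (hF k j) r) s
    simp only [Matrix.sum_apply, Matrix.mul_apply] at h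
    simp only [hV, hW, Matrix.mul_apply, Matrix.of_apply, Fintype.sum_prod_type,
      Matrix.one_apply, Prod.mk.injEq]
    rw [h]
    by_cases hjk : j = k <;> by_cases hrs : r = s <;>
      simp [hjk, hrs, eq_comm, Matrix.one_apply]
  have hWV : W * V = 1 := mul_eq_one_comm.mp hVW
  have hblock : ∀ i i' : Fin d, ∑ k : Fin d, F k i * (B k) ^ (i' : ℕ)
      = if i = i' then 1 else 0 := by
    intro i i'
    ext r s
    have h := congrFun (congrFun hWV (i, r)) (i', s)
    simp only [hV, hW, Matrix.mul_apply, Matrix.of_apply, Fintype.sum_prod_type,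
      Matrix.one_apply, Prod.mk.injEq] at h
    simp only [Matrix.sum_apply, Matrix.mul_apply]
    rw [h]
    by_cases hii : i = i' <;> by_cases hrs : r = s <;>
      simp [hii, hrs, Matrix.one_apply]
  have key : ∀ i : Fin d, ∑ k : Fin d, F k i * Y k = C i := by
    intro i
    calc ∑ k : Fin d, F k i * Y k
        = ∑ k : Fin d, ∑ j : Fin d, (F k i * (B k) ^ (j : ℕ)) * C j := by
          simp [hY, Finset.mul_sum, mul_assoc]
      _ = ∑ j : Fin d, (∑ k : Fin d, F k i * (B k) ^ (j : ℕ)) * C j := by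
          rw [Finset.sum_comm]
          simp [Finset.sum_mul]
      _ = C i := by simp [hblock]
  have interp : ∑ i : Fin d, lam ^ (i : ℕ) • C i = ∑ k : Fin d, M k * Y k := by
    calc ∑ i : Fin d, lam ^ (i : ℕ) • C i
        = ∑ i : Fin d, lam ^ (i : ℕ) • ∑ k : Fin d, F k i * Y k := by
          simp only [key]
      _ = ∑ k : Fin d, ∑ i : Fin d, (lam ^ (i : ℕ) • F k i) * Y k := by
          rw [Finset.sum_comm]
          simp [Finset.smul_sum, smul_mul_assoc]
      _ = ∑ k : Fin d, M k * Y k := by simp [hM, Finset.sum_mul]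
  -- now the norm estimate
  set R : Matrix (Fin b) (Fin d × Fin b) ℝ :=
    Matrix.of fun q p => (M p.1) q p.2 with hR
  set S : Matrix (Fin d × Fin b) (Fin b) ℝ :=
    Matrix.of (fun (p : Fin d × Fin b) (q : Fin b) =>
      (∑ i : Fin d, (B p.1) ^ (i : ℕ) * C i) p.2 q) with hS
  have hRS : R * S = ∑ k : Fin d, M k * Y k := by
    ext q s
    simp [hR, hS, hY, Matrix.mul_apply, Matrix.sum_apply, Fintype.sum_prod_type]
  have hsup0 : 0 ≤ ⨆ k : Fin d, ‖M k‖ := Real.iSup_nonneg fun k => norm_nonneg _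
  have hbdd : BddAbove (Set.range fun k : Fin d => ‖M k‖) :=
    Set.Finite.bddAbove (Set.finite_range _)
  have hRnorm : ‖R‖ ≤ Real.sqrt d * ⨆ k : Fin d, ‖M k‖ := by
    rw [Matrix.l2_opNorm_def]
    refine ContinuousLinearMap.opNorm_le_bound _ (by positivity) (fun x => ?_)
    set xk : Fin d → EuclideanSpace ℝ (Fin b) :=
      fun k => (EuclideanSpace.equiv (Fin b) ℝ).symm (fun t => x (k, t)) with hxk
    have hximg : (Matrix.toEuclideanLin (𝕜 := ℝ) R) x
        = ∑ k : Fin d, (EuclideanSpace.equiv (Fin b) ℝ).symm ((M k) *ᵥ (xk k)) := by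
      ext q
      have : ∀ (v : Fin d → EuclideanSpace ℝ (Fin b)), (∑ k : Fin d, v k) q
          = ∑ k : Fin d, v k q := fun v => by
        induction (Finset.univ : Finset (Fin d)) using Finset.induction with
        | empty => rfl
        | insert _ _ h ih => rw [Finset.sum_insert h, Finset.sum_insert h, ← ih]; rfl
      rw [this]
      simp [Matrix.toEuclideanLin_apply, Matrix.mulVec, dotProduct,
        Fintype.sum_prod_type, hR, hxk, EuclideanSpace.equiv]
    have hxsum : ∑ k : Fin d, ‖xk k‖ ≤ Real.sqrt d * ‖x‖ := by
      have h1 : (∑ k : Fin d, ‖xk k‖) ^ 2 ≤ (d : ℝ) * ∑ k : Fin d, ‖xk k‖ ^ 2 := by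
        simpa using sq_sum_le_card_mul_sum_sq (s := (Finset.univ : Finset (Fin d)))
          (f := fun k => ‖xk k‖)
      have h2 : ∑ k : Fin d, ‖xk k‖ ^ 2 = ‖x‖ ^ 2 := by
        have hxn : ‖x‖ ^ 2 = ∑ p : Fin d × Fin b, ‖x p‖ ^ 2 := by
          rw [EuclideanSpace.norm_eq, Real.sq_sqrt (by positivity)]
        have hxkn : ∀ k, ‖xk k‖ ^ 2 = ∑ t : Fin b, ‖x (k, t)‖ ^ 2 := fun k => by
          rw [EuclideanSpace.norm_eq, Real.sq_sqrt (by positivity)]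
          rfl
        simp [hxkn, hxn, Fintype.sum_prod_type]
      have h3 : ∑ k : Fin d, ‖xk k‖ ≤ Real.sqrt ((d : ℝ) * ‖x‖ ^ 2) := by
        rw [← Real.sqrt_sq (Finset.sum_nonneg fun k _ => norm_nonneg _)]
        exact Real.sqrt_le_sqrt (by rw [← h2]; exact h1)
      calc ∑ k : Fin d, ‖xk k‖ ≤ Real.sqrt ((d : ℝ) * ‖x‖ ^ 2) := h3
        _ = Real.sqrt d * ‖x‖ := by
            rw [Real.sqrt_mul (by positivity), Real.sqrt_sq (norm_nonneg _)]
    rw [LinearEquiv.trans_apply, LinearMap.coe_toContinuousLinearMap', hximg]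
    calc ‖∑ k : Fin d, (EuclideanSpace.equiv (Fin b) ℝ).symm ((M k) *ᵥ (xk k))‖
        ≤ ∑ k : Fin d, ‖(EuclideanSpace.equiv (Fin b) ℝ).symm ((M k) *ᵥ (xk k))‖ :=
          norm_sum_le _ _
      _ ≤ ∑ k : Fin d, ‖M k‖ * ‖xk k‖ :=
          Finset.sum_le_sum fun k _ => Matrix.l2_opNorm_mulVec (M k) (xk k)
      _ ≤ ∑ k : Fin d, (⨆ j : Fin d, ‖M j‖) * ‖xk k‖ :=
          Finset.sum_le_sum fun k _ =>
            mul_le_mul_of_nonneg_right (le_ciSup hbdd k) (norm_nonneg _)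
      _ = (⨆ j : Fin d, ‖M j‖) * ∑ k : Fin d, ‖xk k‖ := by rw [Finset.mul_sum]
      _ ≤ (⨆ j : Fin d, ‖M j‖) * (Real.sqrt d * ‖x‖) :=
          mul_le_mul_of_nonneg_left hxsum hsup0
      _ = Real.sqrt d * (⨆ j : Fin d, ‖M j‖) * ‖x‖ := by ring
  calc ‖∑ i : Fin d, lam ^ (i : ℕ) • C i‖ = ‖R * S‖ := by rw [interp, hRS]
    _ ≤ ‖R‖ * ‖S‖ := Matrix.l2_opNorm_mul R S
    _ ≤ (Real.sqrt d * ⨆ k : Fin d, ‖M k‖) * ‖S‖ :=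
        mul_le_mul_of_nonneg_right hRnorm (norm_nonneg _)
    _ = Real.sqrt d * ‖S‖ * ⨆ k : Fin d, ‖M k‖ := by ring
end
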